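/- Let r₁ = 2^{R̂₁} − 1 and r'₁ = 2^{2R̂₁} − 1 with R̂₁ > 0, and suppose 0 < r₁ < α₁/α₂ with α₁ + α₂ = 1, α₁, α₂ ∈ (0,1). Then 1 − exp(−r₁/((α₁ − α₂r₁)ρ·λ)) < 1 − exp(−r'₁/(ρ·λ)) for all ρ, λ > 0 if and only if α₁/α₂ > 2^{R̂₁}. -/

import Mathlib

/-!
Both outage probabilities have the form `1 - exp (-x / (ρ λ))`, which is strictly increasing in
`x`, so the comparison does not depend on `ρ λ` and reduces to comparing the thresholds
`r₁ / (α₁ - α₂ r₁)` and `r'₁ = (2^R̂₁)² - 1`. With `t = 2^R̂₁` and `α₁ + α₂ = 1` one has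
`(t² - 1)(α₁ - α₂ (t - 1)) - (t - 1) = (t - 1) t (α₁ - α₂ t)`, so the thresholds compare as
`α₂ t < α₁`.
-/

open Real

lemma one_sub_exp_neg_div_mul_lt_iff {a b D c : ℝ} (hc : 0 < c) :
    1 - exp (-a / (D * c)) < 1 - exp (-b / c) ↔ a / D < b := by
  rw [neg_div, neg_div, sub_lt_sub_iff_left, exp_lt_exp, neg_lt_neg_iff, ← div_div,
    div_lt_div_iff_of_pos_right hc]

lemma sub_one_div_lt_sq_sub_one_iff {t α₁ α₂ : ℝ} (ht : 1 < t) (hD : 0 < α₁ - α₂ * (t - 1))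
    (hsum : α₁ + α₂ = 1) :
    (t - 1) / (α₁ - α₂ * (t - 1)) < t ^ 2 - 1 ↔ α₂ * t < α₁ := by
  have hfactor : (t ^ 2 - 1) * (α₁ - α₂ * (t - 1)) - (t - 1) = (t - 1) * t * (α₁ - α₂ * t) := by
    linear_combination (t - 1) * hsum
  rw [div_lt_iff₀ hD, ← sub_pos, hfactor, ← sub_pos (a := α₁)]
  exact mul_pos_iff_of_pos_left (mul_pos (sub_pos.2 ht) (by linarith))

theorem noma_vs_oma_user1_general
    (α₁ α₂ R₁ : ℝ) (hα₂ : 0 < α₂ ∧ α₂ < 1)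
    (hsum : α₁ + α₂ = 1)
    (hr : 0 < (2 : ℝ) ^ R₁ - 1 ∧ (2 : ℝ) ^ R₁ - 1 < α₁ / α₂) :
    (∀ ρ lam : ℝ, 0 < ρ → 0 < lam →
        1 - Real.exp (-((2 : ℝ) ^ R₁ - 1) / ((α₁ - α₂ * ((2 : ℝ) ^ R₁ - 1)) * ρ * lam))
          < 1 - Real.exp (-((2 : ℝ) ^ (2 * R₁) - 1) / (ρ * lam)))
      ↔ α₁ / α₂ > (2 : ℝ) ^ R₁ := by
  have hsq : (2 : ℝ) ^ (2 * R₁) = ((2 : ℝ) ^ R₁) ^ 2 := by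
    rw [mul_comm, rpow_mul zero_le_two, rpow_two]
  set t := (2 : ℝ) ^ R₁
  have hD : 0 < α₁ - α₂ * (t - 1) := by
    have := (lt_div_iff₀ hα₂.1).mp hr.2
    linarith
  have hcompare : ∀ ρ lam : ℝ, 0 < ρ → 0 < lam →
      (1 - exp (-(t - 1) / ((α₁ - α₂ * (t - 1)) * ρ * lam))
        < 1 - exp (-((2 : ℝ) ^ (2 * R₁) - 1) / (ρ * lam)) ↔ α₂ * t < α₁) := by
    intro ρ lam hρ hlam
    rw [mul_assoc, hsq, one_sub_exp_neg_div_mul_lt_iff (mul_pos hρ hlam),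
      sub_one_div_lt_sq_sub_one_iff (by linarith [hr.1]) hD hsum]
  rw [gt_iff_lt, lt_div_iff₀' hα₂.1]
  exact ⟨fun h => (hcompare 1 1 one_pos one_pos).1 (h 1 1 one_pos one_pos),
    fun h ρ lam hρ hlam => (hcompare ρ lam hρ hlam).2 h⟩

/-- The single-round NOMA outage probability of user 1 is below the OMA one for
all ρ, lam > 0 iff α₁/α₂ > 2^{R̂₁}. -/
theorem noma_vs_oma_user1
    (α₁ α₂ R₁ : ℝ) (hα₁ : 0 < α₁ ∧ α₁ < 1) (hα₂ : 0 < α₂ ∧ α₂ < 1)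
    (hsum : α₁ + α₂ = 1) (hR : 0 < R₁)
    (hr : 0 < (2 : ℝ) ^ R₁ - 1 ∧ (2 : ℝ) ^ R₁ - 1 < α₁ / α₂) :
    (∀ ρ lam : ℝ, 0 < ρ → 0 < lam →
        1 - Real.exp (-((2 : ℝ) ^ R₁ - 1) / ((α₁ - α₂ * ((2 : ℝ) ^ R₁ - 1)) * ρ * lam))
          < 1 - Real.exp (-((2 : ℝ) ^ (2 * R₁) - 1) / (ρ * lam)))
      ↔ α₁ / α₂ > (2 : ℝ) ^ R₁ :=
  noma_vs_oma_user1_general α₁ α₂ R₁ hα₂ hsum hr
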